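/- arXiv:2412.15965 — 2 statements merged into one kernel-verified Lean document; each statement's English description precedes it below -/
import Mathlib

section
/- Consider minimizing Σ_{j=1}^K (r_j − a_j)² over r ∈ ℝ^K subject to r_k² ≥ Γ(Σ_{j≠k} r_j² + σ²) and r_k ≥ 0, with Γ > 0, σ > 0, a_j ≥ 0 for j ≠ k, and a_k = 0. Then the unique KKT point (and hence the optimal solution) is r_j* = a_j/(1+Γ) for j ≠ k and r_k* = (Γ Σ_{j≠k} a_j²/(1+Γ)² + Γσ²)^{1/2}. -/
/-- The KKT system for the projection problem
min Σⱼ (rⱼ - aⱼ)² s.t. r_k² ≥ Γ(Σ_{j≠k} rⱼ² + σ²), r_k ≥ 0,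
with multipliers η (SINR constraint) and ν (nonnegativity constraint). -/
def KKT {K : ℕ} (k : Fin K) (a : Fin K → ℝ) (Γ σ : ℝ)
    (r : Fin K → ℝ) (η ν : ℝ) : Prop :=
  ((1 - η) * r k = a k + ν / 2) ∧
  (∀ j, j ≠ k → (1 + Γ * η) * r j = a j) ∧
  (η * (r k ^ 2 - Γ * ((∑ j ∈ Finset.univ.erase k, r j ^ 2) + σ ^ 2)) = 0) ∧
  (Γ * ((∑ j ∈ Finset.univ.erase k, r j ^ 2) + σ ^ 2) ≤ r k ^ 2) ∧
  0 ≤ η ∧ ν * r k = 0 ∧ 0 ≤ ν ∧ 0 ≤ r k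

theorem stmt11 {K : ℕ} (k : Fin K) (a : Fin K → ℝ) (Γ σ : ℝ)
    (hΓ : 0 < Γ) (hσ : 0 < σ) (ha : ∀ j, j ≠ k → 0 ≤ a j) (hak : a k = 0)
    (rstar : Fin K → ℝ)
    (hrstar : rstar = fun j => if j = k then
        Real.sqrt (Γ * ∑ j ∈ Finset.univ.erase k, (a j) ^ 2 / (1 + Γ) ^ 2 + Γ * σ ^ 2)
      else a j / (1 + Γ)) :
    KKT k a Γ σ rstar 1 0 ∧
    (∀ r η ν, KKT k a Γ σ r η ν → r = rstar) ∧
    (∀ r : Fin K → ℝ,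
      Γ * ((∑ j ∈ Finset.univ.erase k, r j ^ 2) + σ ^ 2) ≤ r k ^ 2 → 0 ≤ r k →
      ∑ j, (rstar j - a j) ^ 2 ≤ ∑ j, (r j - a j) ^ 2) := by
  have hc : (0:ℝ) < 1 + Γ := by linarith
  have hc' : (1:ℝ) + Γ ≠ 0 := ne_of_gt hc
  set S : ℝ := Γ * ∑ j ∈ Finset.univ.erase k, (a j) ^ 2 / (1 + Γ) ^ 2 + Γ * σ ^ 2 with hSdef
  have hsum0 : 0 ≤ ∑ j ∈ Finset.univ.erase k, (a j) ^ 2 / (1 + Γ) ^ 2 :=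
    Finset.sum_nonneg (fun j _ => by positivity)
  have hS0 : 0 ≤ S := by positivity
  have hsq : Real.sqrt S ^ 2 = S := Real.sq_sqrt hS0
  have hrk : rstar k = Real.sqrt S := by simp [hrstar]
  have hrj : ∀ j, j ≠ k → rstar j = a j / (1 + Γ) := by
    intro j hj; simp [hrstar, hj]
  have hsumst : ∑ j ∈ Finset.univ.erase k, rstar j ^ 2
      = ∑ j ∈ Finset.univ.erase k, (a j) ^ 2 / (1 + Γ) ^ 2 := by
    refine Finset.sum_congr rfl (fun j hj => ?_)
    rw [hrj j (Finset.mem_erase.mp hj).1]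
    field_simp
  have hkkt : KKT k a Γ σ rstar 1 0 := by
    refine ⟨by simp [hrk, hak], fun j hj => ?_, ?_, ?_, by norm_num, by norm_num, le_refl _,
      hrk ▸ Real.sqrt_nonneg S⟩
    · rw [hrj j hj]; field_simp
    · rw [hrk, hsq, hsumst]; ring
    · rw [hrk, hsq, hsumst]; exact le_of_eq (by ring)
  refine ⟨hkkt, fun r η ν h => ?_, fun r hfeas hrk0 => ?_⟩
  · obtain ⟨h1, h2, h3, h4, hη, hνr, hν, hr0⟩ := h
    have hsr : 0 ≤ ∑ j ∈ Finset.univ.erase k, r j ^ 2 :=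
      Finset.sum_nonneg (fun j _ => by positivity)
    have hrkpos : 0 < r k := by
      rcases hr0.lt_or_eq with h | h
      · exact h
      · exfalso; rw [← h] at h4
        nlinarith [mul_pos hΓ (pow_pos hσ 2), mul_nonneg hΓ.le hsr]
    have hν0 : ν = 0 := by
      rcases mul_eq_zero.mp hνr with h | h
      · exact h
      · exact absurd h (ne_of_gt hrkpos)
    have hη1 : η = 1 := by
      rw [hak, hν0] at h1
      have : (1 - η) = 0 := by
        rcases mul_eq_zero.mp (by linarith [h1] : (1 - η) * r k = 0) with h | h
        · exact h
        · exact absurd h (ne_of_gt hrkpos)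
      linarith
    subst hη1
    have hrj' : ∀ j, j ≠ k → r j = a j / (1 + Γ) := by
      intro j hj
      have := h2 j hj
      field_simp at this ⊢
      linarith [this]
    have hsumr : ∑ j ∈ Finset.univ.erase k, r j ^ 2
        = ∑ j ∈ Finset.univ.erase k, (a j) ^ 2 / (1 + Γ) ^ 2 := by
      refine Finset.sum_congr rfl (fun j hj => ?_)
      rw [hrj' j (Finset.mem_erase.mp hj).1]
      field_simp
    have hrk2 : r k ^ 2 = S := by
      have h3' : r k ^ 2 = Γ * ((∑ j ∈ Finset.univ.erase k, r j ^ 2) + σ ^ 2) := by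
        have := h3; nlinarith [this]
      rw [h3', hsumr, hSdef]; ring
    have hrkval : r k = Real.sqrt S := by
      rw [← hrk2, Real.sqrt_sq hr0]
    funext j
    by_cases hj : j = k
    · subst hj; rw [hrkval, hrk]
    · rw [hrj' j hj, hrj j hj]
  · -- optimality
    have split1 : ∑ j, (rstar j - a j) ^ 2
        = (∑ j ∈ Finset.univ.erase k, (rstar j - a j) ^ 2) + (rstar k - a k) ^ 2 :=
      (Finset.sum_erase_add _ _ (Finset.mem_univ k)).symm
    have split2 : ∑ j, (r j - a j) ^ 2
        = (∑ j ∈ Finset.univ.erase k, (r j - a j) ^ 2) + (r k - a k) ^ 2 :=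
      (Finset.sum_erase_add _ _ (Finset.mem_univ k)).symm
    rw [split1, split2, hak, hrk, sub_zero, sub_zero, hsq]
    have key : ∀ j ∈ Finset.univ.erase k,
        Γ * ((a j) ^ 2 / (1 + Γ) ^ 2) + (rstar j - a j) ^ 2
          ≤ Γ * r j ^ 2 + (r j - a j) ^ 2 := by
      intro j hj
      rw [hrj j (Finset.mem_erase.mp hj).1]
      have h1 : (a j / (1 + Γ) - a j) ^ 2 = Γ ^ 2 * (a j) ^ 2 / (1 + Γ) ^ 2 := by
        field_simp; ring
      rw [h1]
      have h2 : 0 ≤ ((1 + Γ) * r j - a j) ^ 2 := sq_nonneg _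
      have h3 : Γ * (a j ^ 2 / (1 + Γ) ^ 2) + Γ ^ 2 * a j ^ 2 / (1 + Γ) ^ 2
          = Γ * a j ^ 2 / (1 + Γ) := by field_simp
      rw [h3, div_le_iff₀ hc]
      nlinarith [h2]
    have hsumle := Finset.sum_le_sum key
    rw [Finset.sum_add_distrib, Finset.sum_add_distrib, ← Finset.mul_sum, ← Finset.mul_sum]
      at hsumle
    have hfeas' := hfeas
    rw [mul_add] at hfeas'
    rw [hSdef]
    linarith [hsumle, hfeas']
end

section
/- Let X₁, X₂ ∈ ℂ^{k×m} be full row rank matrices. Then ‖(X₁X₁†)⁻¹X₁ − (X₂X₂†)⁻¹X₂‖_F ≤ C(X₁, X₂) ‖X₁ − X₂‖_F, where C(X₁,X₂) = ‖(X₁X₁†)⁻¹‖₂ ‖(X₂X₂†)⁻¹‖₂ ‖X₁‖₂(‖X₁‖₂ + ‖X₂‖₂) + ‖(X₂X₂†)⁻¹‖₂. -/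
open Matrix

/-- Spectral norm (largest singular value) of a complex matrix. -/
noncomputable def specNorm {m n : ℕ} (X : Matrix (Fin m) (Fin n) ℂ) : ℝ :=
  ‖LinearMap.toContinuousLinearMap (Matrix.toEuclideanLin X)‖

/-- Frobenius norm of a complex matrix. -/
noncomputable def frobNorm {m n : ℕ} (X : Matrix (Fin m) (Fin n) ℂ) : ℝ :=
  Real.sqrt (∑ i, ∑ j, ‖X i j‖ ^ 2)

section spec
open scoped Matrix.Norms.L2Operator
lemma specNorm_eq {p q : ℕ} (X : Matrix (Fin p) (Fin q) ℂ) : specNorm X = ‖X‖ := rfl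
lemma specNorm_nonneg {p q : ℕ} (X : Matrix (Fin p) (Fin q) ℂ) : 0 ≤ specNorm X := norm_nonneg _
lemma specNorm_conjT {p q : ℕ} (X : Matrix (Fin p) (Fin q) ℂ) : specNorm Xᴴ = specNorm X := by
  rw [specNorm_eq, specNorm_eq]; exact Matrix.l2_opNorm_conjTranspose X
lemma specNorm_mul_le {p q r : ℕ} (A : Matrix (Fin p) (Fin q) ℂ) (B : Matrix (Fin q) (Fin r) ℂ) :
    specNorm (A * B) ≤ specNorm A * specNorm B := by
  rw [specNorm_eq, specNorm_eq, specNorm_eq]; exact Matrix.l2_opNorm_mul A B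
end spec

section frob
attribute [local instance] Matrix.frobeniusSeminormedAddCommGroup
lemma frobNorm_eq {p q : ℕ} (X : Matrix (Fin p) (Fin q) ℂ) : frobNorm X = ‖X‖ := by
  rw [Matrix.frobenius_norm_def, frobNorm, Real.sqrt_eq_rpow]
  norm_num [Real.rpow_two]
lemma frobNorm_nonneg {p q : ℕ} (X : Matrix (Fin p) (Fin q) ℂ) : 0 ≤ frobNorm X :=
  Real.sqrt_nonneg _
lemma frobNorm_add_le {p q : ℕ} (A B : Matrix (Fin p) (Fin q) ℂ) :
    frobNorm (A + B) ≤ frobNorm A + frobNorm B := by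
  rw [frobNorm_eq, frobNorm_eq, frobNorm_eq]; exact norm_add_le A B
lemma frobNorm_neg {p q : ℕ} (A : Matrix (Fin p) (Fin q) ℂ) : frobNorm (-A) = frobNorm A := by
  rw [frobNorm_eq, frobNorm_eq]; exact norm_neg A
lemma frobNorm_conjT {p q : ℕ} (X : Matrix (Fin p) (Fin q) ℂ) : frobNorm Xᴴ = frobNorm X := by
  rw [frobNorm_eq, frobNorm_eq]; exact Matrix.frobenius_norm_conjTranspose X
end frob

section mixed
open scoped Matrix.Norms.L2Operator
lemma frob_mul_le_left {p q r : ℕ} (A : Matrix (Fin p) (Fin q) ℂ) (B : Matrix (Fin q) (Fin r) ℂ) :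
    frobNorm (A * B) ≤ specNorm A * frobNorm B := by
  have hA : 0 ≤ specNorm A := specNorm_nonneg A
  have key : ∑ j, ∑ i, ‖(A * B) i j‖ ^ 2 ≤ specNorm A ^ 2 * ∑ j, ∑ i, ‖B i j‖ ^ 2 := by
    rw [Finset.mul_sum]
    refine Finset.sum_le_sum fun j _ => ?_
    set x : EuclideanSpace ℂ (Fin q) := (EuclideanSpace.equiv (Fin q) ℂ).symm (fun l => B l j) with hx
    have h1 : ∑ i, ‖(A * B) i j‖ ^ 2
        = ‖(EuclideanSpace.equiv (Fin p) ℂ).symm (A *ᵥ (fun l => B l j))‖ ^ 2 := by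
      rw [EuclideanSpace.norm_eq, Real.sq_sqrt (by positivity)]
      refine Finset.sum_congr rfl fun i _ => ?_
      simp [Matrix.mul_apply, Matrix.mulVec, dotProduct]
    have h2 : ∑ i, ‖B i j‖ ^ 2 = ‖x‖ ^ 2 := by
      rw [EuclideanSpace.norm_eq, Real.sq_sqrt (by positivity)]
      simp [hx]
    have h3 := Matrix.l2_opNorm_mulVec A x
    rw [h1, h2, ← mul_pow]
    have h4 : ‖(EuclideanSpace.equiv (Fin p) ℂ).symm (A *ᵥ (fun l => B l j))‖
        = ‖(EuclideanSpace.equiv (Fin p) ℂ).symm (A *ᵥ x)‖ := rfl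
    rw [h4]
    exact pow_le_pow_left₀ (norm_nonneg _) (h3.trans (le_of_eq (by rw [specNorm_eq]))) 2
  calc frobNorm (A * B) = Real.sqrt (∑ j, ∑ i, ‖(A * B) i j‖ ^ 2) := by
        rw [frobNorm, Finset.sum_comm]
    _ ≤ Real.sqrt (specNorm A ^ 2 * ∑ j, ∑ i, ‖B i j‖ ^ 2) := Real.sqrt_le_sqrt key
    _ = specNorm A * frobNorm B := by
        rw [Real.sqrt_mul (sq_nonneg _), Real.sqrt_sq hA, frobNorm, Finset.sum_comm]
lemma frob_mul_le_right {p q r : ℕ} (A : Matrix (Fin p) (Fin q) ℂ) (B : Matrix (Fin q) (Fin r) ℂ) :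
    frobNorm (A * B) ≤ frobNorm A * specNorm B := by
  have := frob_mul_le_left Bᴴ Aᴴ
  rw [← Matrix.conjTranspose_mul, frobNorm_conjT, frobNorm_conjT, specNorm_conjT] at this
  linarith
end mixed

theorem stmt15 {k m : ℕ} (X₁ X₂ : Matrix (Fin k) (Fin m) ℂ)
    (h₁ : IsUnit (X₁ * X₁ᴴ)) (h₂ : IsUnit (X₂ * X₂ᴴ)) :
    frobNorm ((X₁ * X₁ᴴ)⁻¹ * X₁ - (X₂ * X₂ᴴ)⁻¹ * X₂)
      ≤ (specNorm ((X₁ * X₁ᴴ)⁻¹) * specNorm ((X₂ * X₂ᴴ)⁻¹) * specNorm X₁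
            * (specNorm X₁ + specNorm X₂)
          + specNorm ((X₂ * X₂ᴴ)⁻¹)) * frobNorm (X₁ - X₂) := by
  set S₁ := X₁ * X₁ᴴ with hS₁
  set S₂ := X₂ * X₂ᴴ with hS₂
  set P₁ := S₁⁻¹ with hP₁
  set P₂ := S₂⁻¹ with hP₂
  have hd₁ : IsUnit S₁.det := (Matrix.isUnit_iff_isUnit_det S₁).mp h₁
  have hd₂ : IsUnit S₂.det := (Matrix.isUnit_iff_isUnit_det S₂).mp h₂
  have hi₁ : P₁ * S₁ = 1 := Matrix.nonsing_inv_mul S₁ hd₁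
  have hi₂ : S₂ * P₂ = 1 := Matrix.mul_nonsing_inv S₂ hd₂
  -- resolvent identity applied to the difference
  have hE : P₁ * X₁ - P₂ * X₂ = P₁ * (S₂ - S₁) * (P₂ * X₁) + P₂ * (X₁ - X₂) := by
    have e1 : P₁ * (S₂ - S₁) * (P₂ * X₁) = P₁ * (S₂ * P₂) * X₁ - (P₁ * S₁) * P₂ * X₁ := by
      simp only [Matrix.mul_sub, Matrix.sub_mul, Matrix.mul_assoc]
    rw [e1, hi₁, hi₂, mul_one, one_mul, Matrix.mul_sub]
    abel
  have hsplit : S₂ - S₁ = X₂ * (X₂ - X₁)ᴴ + (X₂ - X₁) * X₁ᴴ := by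
    rw [hS₁, hS₂, Matrix.conjTranspose_sub]
    simp only [Matrix.mul_sub, Matrix.sub_mul]
    abel
  have hE2 : P₁ * X₁ - P₂ * X₂
      = (P₁ * X₂) * ((X₂ - X₁)ᴴ * (P₂ * X₁)) + P₁ * ((X₂ - X₁) * (X₁ᴴ * (P₂ * X₁)))
        + P₂ * (X₁ - X₂) := by
    rw [hE, hsplit]
    simp only [Matrix.mul_add, Matrix.add_mul, Matrix.mul_assoc]
  set Δ := X₁ - X₂ with hΔ
  have hΔ' : X₂ - X₁ = -Δ := by rw [hΔ]; abel
  have hfΔ' : frobNorm (X₂ - X₁) = frobNorm Δ := by rw [hΔ', frobNorm_neg]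
  -- bounds on the three terms
  have hb1 : frobNorm ((P₁ * X₂) * ((X₂ - X₁)ᴴ * (P₂ * X₁)))
      ≤ (specNorm P₁ * specNorm X₂) * (frobNorm Δ * (specNorm P₂ * specNorm X₁)) := by
    calc frobNorm ((P₁ * X₂) * ((X₂ - X₁)ᴴ * (P₂ * X₁)))
        ≤ specNorm (P₁ * X₂) * frobNorm ((X₂ - X₁)ᴴ * (P₂ * X₁)) := frob_mul_le_left _ _
      _ ≤ (specNorm P₁ * specNorm X₂) * (frobNorm Δ * (specNorm P₂ * specNorm X₁)) := by
          refine mul_le_mul (specNorm_mul_le _ _) ?_ (frobNorm_nonneg _)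
            (mul_nonneg (specNorm_nonneg _) (specNorm_nonneg _))
          calc frobNorm ((X₂ - X₁)ᴴ * (P₂ * X₁))
              ≤ frobNorm (X₂ - X₁)ᴴ * specNorm (P₂ * X₁) := frob_mul_le_right _ _
            _ ≤ frobNorm Δ * (specNorm P₂ * specNorm X₁) := by
                rw [frobNorm_conjT, hfΔ']
                exact mul_le_mul_of_nonneg_left (specNorm_mul_le _ _) (frobNorm_nonneg _)
  have hb2 : frobNorm (P₁ * ((X₂ - X₁) * (X₁ᴴ * (P₂ * X₁))))
      ≤ specNorm P₁ * (frobNorm Δ * (specNorm X₁ * (specNorm P₂ * specNorm X₁))) := by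
    calc frobNorm (P₁ * ((X₂ - X₁) * (X₁ᴴ * (P₂ * X₁))))
        ≤ specNorm P₁ * frobNorm ((X₂ - X₁) * (X₁ᴴ * (P₂ * X₁))) := frob_mul_le_left _ _
      _ ≤ specNorm P₁ * (frobNorm Δ * (specNorm X₁ * (specNorm P₂ * specNorm X₁))) := by
          refine mul_le_mul_of_nonneg_left ?_ (specNorm_nonneg _)
          calc frobNorm ((X₂ - X₁) * (X₁ᴴ * (P₂ * X₁)))
              ≤ frobNorm (X₂ - X₁) * specNorm (X₁ᴴ * (P₂ * X₁)) := frob_mul_le_right _ _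
            _ ≤ frobNorm Δ * (specNorm X₁ * (specNorm P₂ * specNorm X₁)) := by
                rw [hfΔ']
                refine mul_le_mul_of_nonneg_left ?_ (frobNorm_nonneg _)
                calc specNorm (X₁ᴴ * (P₂ * X₁))
                    ≤ specNorm X₁ᴴ * specNorm (P₂ * X₁) := specNorm_mul_le _ _
                  _ ≤ specNorm X₁ * (specNorm P₂ * specNorm X₁) := by
                      rw [specNorm_conjT]
                      exact mul_le_mul_of_nonneg_left (specNorm_mul_le _ _)
                        (specNorm_nonneg _)
  have hb3 : frobNorm (P₂ * (X₁ - X₂)) ≤ specNorm P₂ * frobNorm Δ := frob_mul_le_left _ _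
  have htri : frobNorm (P₁ * X₁ - P₂ * X₂)
      ≤ frobNorm ((P₁ * X₂) * ((X₂ - X₁)ᴴ * (P₂ * X₁)))
        + frobNorm (P₁ * ((X₂ - X₁) * (X₁ᴴ * (P₂ * X₁))))
        + frobNorm (P₂ * (X₁ - X₂)) := by
    rw [hE2]
    exact (frobNorm_add_le _ _).trans (add_le_add (frobNorm_add_le _ _) le_rfl)
  have := htri.trans (by linarith : _ ≤ (specNorm P₁ * specNorm X₂) * (frobNorm Δ * (specNorm P₂ * specNorm X₁))
        + specNorm P₁ * (frobNorm Δ * (specNorm X₁ * (specNorm P₂ * specNorm X₁)))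
        + specNorm P₂ * frobNorm Δ)
  calc frobNorm (P₁ * X₁ - P₂ * X₂)
      ≤ (specNorm P₁ * specNorm X₂) * (frobNorm Δ * (specNorm P₂ * specNorm X₁))
        + specNorm P₁ * (frobNorm Δ * (specNorm X₁ * (specNorm P₂ * specNorm X₁)))
        + specNorm P₂ * frobNorm Δ := this
    _ = (specNorm P₁ * specNorm P₂ * specNorm X₁ * (specNorm X₁ + specNorm X₂)
          + specNorm P₂) * frobNorm Δ := by ring
end
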